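/- Suppose R satisfies (Z1.1), (Z1.2) and (Z3.2). Let g be an essential element of G(0) that is cyclically minimal in rank 1/2, and let x ∈ 0(g). Then (g·x)ⁿ = gⁿ in G(0). -/

import Mathlib

open scoped Classical

noncomputable section

namespace OlshanskiiSapir

/-- The number of occurrences of letters from `Y` (with either exponent `±1`)
in a word over the alphabet `X`. -/
def wordYLen {X : Type} (Y : Set X) (l : List (X × Bool)) : ℕ :=
  (l.filter fun p => decide (p.1 ∈ Y)).length

/-- The `Y`-length of an element of the free group: the minimal number of
`Y`-letters occurring in a word representing it. -/
def fYLen {X : Type} (Y : Set X) (w : FreeGroup X) : ℕ :=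
  sInf {k | ∃ l : List (X × Bool), FreeGroup.mk l = w ∧ wordYLen Y l = k}

/-- The `Y`-length of an element `g` of a group `G` marked by an epimorphism
`π : FreeGroup X →* G`: the minimal number of `Y`-letters in a word representing `g`. -/
def yLen {X G : Type} [Group G] (Y : Set X) (π : FreeGroup X →* G) (g : G) : ℕ :=
  sInf {k | ∃ l : List (X × Bool), π (FreeGroup.mk l) = g ∧ wordYLen Y l = k}

/-- Condition (Z1.1): every relator either has `Y`-length `0` or, up to cyclic
shift (i.e. up to conjugacy), has the form `a * y₁ * b * y₂⁻¹` with `y₁, y₂ ∈ Y`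
and `a`, `b` of `Y`-length `0`. -/
def Z11 {X : Type} (Y : Set X) (R : Set (FreeGroup X)) : Prop :=
  ∀ r ∈ R, fYLen Y r = 0 ∨
    ∃ a b : FreeGroup X, ∃ y₁ ∈ Y, ∃ y₂ ∈ Y,
      fYLen Y a = 0 ∧ fYLen Y b = 0 ∧
      IsConj (a * FreeGroup.of y₁ * b * (FreeGroup.of y₂)⁻¹) r

/-- An element of `G` is essential if no conjugate of it is a `0`-element
(an element of `Y`-length `0`). -/
def Essential {X G : Type} [Group G] (Y : Set X) (π : FreeGroup X →* G) (g : G) : Prop :=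
  ∀ h : G, yLen Y π (h * g * h⁻¹) ≠ 0

/-- `OSub Y π g`: the maximal subgroup consisting of `0`-elements which
contains `g` in its normalizer. -/
def OSub {X G : Type} [Group G] (Y : Set X) (π : FreeGroup X →* G) (g : G) : Subgroup G :=
  sSup {H : Subgroup G | (∀ x ∈ H, yLen Y π x = 0) ∧ g ∈ Subgroup.normalizer (H : Set G)}

/-! By (Z3.2) there is a `0`-element `r` such that `g * r⁻¹` centralizes `0(g)`, so conjugation
by `g` and by `r` agree on `0(g)`, which `g` normalizes. Hence `(g * x) ^ m = g ^ m * w` and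
`(r * x) ^ m = r ^ m * w` with one and the same `w ∈ 0(g)`. For `m = n` both `r` and `r * x` are
`0`-elements, so (Z1.2) gives `r ^ n = (r * x) ^ n = 1`, whence `w = 1`. -/

section Conjugation

variable {G : Type*} [Group G]

theorem inv_mul_mul_eq_of_commute {g r w : G} (h : Commute (g * r⁻¹) w) :
    g⁻¹ * w * g = r⁻¹ * w * r :=
  calc g⁻¹ * w * g = g⁻¹ * (w * (g * r⁻¹)) * r := by group
    _ = g⁻¹ * (g * r⁻¹ * w) * r := by rw [h.eq]
    _ = r⁻¹ * w * r := by group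

variable {K : Subgroup G} {g r x : G}

theorem exists_mem_pow_mul_eq_pow_mul (hg : g ∈ Subgroup.normalizer (K : Set G))
    (hc : ∀ y ∈ K, Commute (g * r⁻¹) y) (hx : x ∈ K) (m : ℕ) :
    ∃ w ∈ K, (g * x) ^ m = g ^ m * w ∧ (r * x) ^ m = r ^ m * w := by
  induction m with
  | zero => exact ⟨1, K.one_mem, by simp, by simp⟩
  | succ m ih =>
    obtain ⟨w, hwK, hg_pow, hr_pow⟩ := ih
    have hconj : g⁻¹ * w * g ∈ K := (Subgroup.mem_normalizer_iff''.mp hg w).mp hwK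
    refine ⟨g⁻¹ * w * g * x, K.mul_mem hconj hx, ?_, ?_⟩
    · rw [pow_succ, pow_succ, hg_pow]
      group
    · rw [pow_succ, pow_succ, hr_pow, inv_mul_mul_eq_of_commute (hc w hwK)]
      group

theorem mul_pow_eq_pow_of_commute (hg : g ∈ Subgroup.normalizer (K : Set G))
    (hc : ∀ y ∈ K, Commute (g * r⁻¹) y) (hx : x ∈ K) {m : ℕ} (hm : (r * x) ^ m = r ^ m) :
    (g * x) ^ m = g ^ m := by
  obtain ⟨w, -, hg_pow, hr_pow⟩ := exists_mem_pow_mul_eq_pow_mul hg hc hx m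
  rw [hm, left_eq_mul] at hr_pow
  rw [hg_pow, hr_pow, mul_one]

end Conjugation

section YLength

variable {X G : Type} [Group G] {Y : Set X} {π : FreeGroup X →* G}

@[simp]
theorem wordYLen_append (l₁ l₂ : List (X × Bool)) :
    wordYLen Y (l₁ ++ l₂) = wordYLen Y l₁ + wordYLen Y l₂ := by
  simp [wordYLen, List.filter_append]

@[simp]
theorem wordYLen_invRev (l : List (X × Bool)) :
    wordYLen Y (FreeGroup.invRev l) = wordYLen Y l := by
  simp [wordYLen, FreeGroup.invRev, List.filter_map, Function.comp_def]

-- Without surjectivity, `sInf ∅ = 0` would make every element outside the image a `0`-element.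
theorem yLen_eq_zero_iff (hs : Function.Surjective π) {g : G} :
    yLen Y π g = 0 ↔ ∃ l, π (FreeGroup.mk l) = g ∧ wordYLen Y l = 0 := by
  refine ⟨fun h => (Nat.sInf_eq_zero.mp h).resolve_right ?_, fun h => Nat.sInf_eq_zero.mpr (.inl h)⟩
  obtain ⟨w, rfl⟩ := hs g
  exact Set.nonempty_iff_ne_empty.mp ⟨_, w.toWord, by rw [FreeGroup.mk_toWord], rfl⟩

variable (Y π) in
def yLenZeroSubgroup (hs : Function.Surjective π) : Subgroup G where
  carrier := {a | yLen Y π a = 0}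
  one_mem' := (yLen_eq_zero_iff hs).mpr ⟨[], by rw [← FreeGroup.one_eq_mk, map_one], rfl⟩
  mul_mem' {a b} ha hb := by
    obtain ⟨l₁, rfl, h₁⟩ := (yLen_eq_zero_iff hs).mp ha
    obtain ⟨l₂, rfl, h₂⟩ := (yLen_eq_zero_iff hs).mp hb
    exact (yLen_eq_zero_iff hs).mpr
      ⟨l₁ ++ l₂, by rw [← FreeGroup.mul_mk, map_mul], by simp [h₁, h₂]⟩
  inv_mem' {a} ha := by
    obtain ⟨l, rfl, h⟩ := (yLen_eq_zero_iff hs).mp ha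
    exact (yLen_eq_zero_iff hs).mpr
      ⟨FreeGroup.invRev l, by rw [← FreeGroup.inv_mk, map_inv], by simp [h]⟩

theorem mem_yLenZeroSubgroup {hs : Function.Surjective π} {a : G} :
    a ∈ yLenZeroSubgroup Y π hs ↔ yLen Y π a = 0 :=
  Iff.rfl

theorem pow_eq_one_of_yLen_eq_zero (hs : Function.Surjective π) {n : ℕ}
    (hburnside : ∀ u : FreeGroup X, fYLen Y u = 0 → π (u ^ n) = 1) {a : G}
    (ha : yLen Y π a = 0) : a ^ n = 1 := by
  obtain ⟨l, rfl, hl⟩ := (yLen_eq_zero_iff hs).mp ha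
  rw [← map_pow]
  exact hburnside _ (Nat.sInf_eq_zero.mpr (.inl ⟨l, rfl, hl⟩))

theorem OSub_le_yLenZeroSubgroup (hs : Function.Surjective π) (g : G) :
    OSub Y π g ≤ yLenZeroSubgroup Y π hs :=
  sSup_le fun _ hH a ha => hH.1 a ha

theorem mem_normalizer_OSub (g : G) :
    g ∈ Subgroup.normalizer (OSub Y π g : Set G) := by
  rw [OSub, sSup_eq_iSup']
  exact Subgroup.iInf_normalizer_le_normalizer_iSup _ (Subgroup.mem_iInf.mpr fun H => H.2.2)

end YLength

theorem statement10_general {X G₀ G₁ : Type} [Group G₀] [Group G₁] (Y : Set X) (n : ℕ)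
    (π₀ : FreeGroup X →* G₀) (hs₀ : Function.Surjective π₀)
    (π₁ : FreeGroup X →* G₁) (φ : G₀ →* G₁)
    (hZ12 : ∀ u : FreeGroup X, fYLen Y u = 0 → π₀ (u ^ n) = 1)
    (hZ32 : ∀ g : G₀, Essential Y π₀ g →
      (∀ h : G₁, yLen Y π₀ g ≤ yLen Y π₁ (h * φ g * h⁻¹)) →
      ∃ r : G₀, yLen Y π₀ r = 0 ∧ ∀ x ∈ OSub Y π₀ g, Commute (g * r⁻¹) x)
    (g : G₀) (hg : Essential Y π₀ g)
    (hgmin : ∀ h : G₁, yLen Y π₀ g ≤ yLen Y π₁ (h * φ g * h⁻¹))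
    (x : G₀) (hx : x ∈ OSub Y π₀ g) :
    (g * x) ^ n = g ^ n := by
  obtain ⟨r, hr, hcomm⟩ := hZ32 g hg hgmin
  have hrx : r * x ∈ yLenZeroSubgroup Y π₀ hs₀ :=
    mul_mem (mem_yLenZeroSubgroup.mpr hr) (OSub_le_yLenZeroSubgroup hs₀ g hx)
  refine mul_pow_eq_pow_of_commute (mem_normalizer_OSub g) hcomm hx ?_
  rw [pow_eq_one_of_yLen_eq_zero hs₀ hZ12 hrx, pow_eq_one_of_yLen_eq_zero hs₀ hZ12 hr]

/-- (Lemma `star`.) Suppose the presentation satisfies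
(Z1.1), (Z1.2) and (Z3.2).  Here `G₀ = G(0)` is defined by the relators `R₀`,
and `G₁ = G(1/2)` is defined by the relators `R₀ ∪ Rh` (`Rh` being the hubs).
If `g` is an essential element of `G(0)` which is cyclically minimal in rank
`1/2`, and `x ∈ 0(g)`, then `(g·x)ⁿ = gⁿ` in `G(0)`. -/
theorem statement10 {X G₀ G₁ : Type} [Group G₀] [Group G₁] (Y : Set X)
    (R₀ Rh : Set (FreeGroup X)) (n : ℕ) (hodd : Odd n)
    (π₀ : FreeGroup X →* G₀) (hs₀ : Function.Surjective π₀)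
    (hk₀ : π₀.ker = Subgroup.normalClosure R₀)
    (π₁ : FreeGroup X →* G₁) (hs₁ : Function.Surjective π₁)
    (hk₁ : π₁.ker = Subgroup.normalClosure (R₀ ∪ Rh))
    (φ : G₀ →* G₁) (hφ : ∀ w : FreeGroup X, φ (π₀ w) = π₁ w)
    (hZ11 : Z11 Y R₀)
    (hZ12 : ∀ u : FreeGroup X, fYLen Y u = 0 → π₀ (u ^ n) = 1)
    (hZ32 : ∀ g : G₀, Essential Y π₀ g →
      (∀ h : G₁, yLen Y π₀ g ≤ yLen Y π₁ (h * φ g * h⁻¹)) →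
      ∃ r : G₀, yLen Y π₀ r = 0 ∧ ∀ x ∈ OSub Y π₀ g, Commute (g * r⁻¹) x)
    (g : G₀) (hg : Essential Y π₀ g)
    (hgmin : ∀ h : G₁, yLen Y π₀ g ≤ yLen Y π₁ (h * φ g * h⁻¹))
    (x : G₀) (hx : x ∈ OSub Y π₀ g) :
    (g * x) ^ n = g ^ n :=
  statement10_general Y n π₀ hs₀ π₁ φ hZ12 hZ32 g hg hgmin x hx

end OlshanskiiSapir
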